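/- Let X be a compact metric space, Y ⊆ X totally disconnected, and y ∈ Y. Define F(y) = ⋂ {closure(U) : U open in X, y ∈ U, frontier(U) ∩ Y = ∅}. If Y is not zero-dimensional at y, then F(y) is a nondegenerate subcontinuum of X (compact, connected, with more than one point) and F(y) ∩ Y = {y}. -/

import Mathlib

open Set Topology

/-- `C` is a relatively clopen subset of `Y` (clopen in the subspace `Y`). -/
def RelClopen {α : Type*} [TopologicalSpace α] (Y C : Set α) : Prop :=
  (∃ U : Set α, IsOpen U ∧ C = U ∩ Y) ∧ (∃ F : Set α, IsClosed F ∧ C = F ∩ Y)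

/-- `Y` is totally disconnected: any two points of `Y` lie in disjoint relatively
clopen subsets of `Y`. -/
def TotDisconnIn {α : Type*} [TopologicalSpace α] (Y : Set α) : Prop :=
  ∀ a ∈ Y, ∀ b ∈ Y, a ≠ b → ∃ C : Set α, RelClopen Y C ∧ a ∈ C ∧ b ∉ C

/-- `F(y)`: the intersection of closures of all open sets `U ∋ y` whose
frontier misses `Y`. -/
def Fset {α : Type*} [TopologicalSpace α] (Y : Set α) (y : α) : Set α :=
  ⋂₀ {T | ∃ U : Set α, IsOpen U ∧ y ∈ U ∧ frontier U ∩ Y = ∅ ∧ T = closure U}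

/-- `Y` is zero-dimensional at `y`: every relatively open neighborhood of `y` in `Y`
contains a relatively clopen neighborhood of `y`. -/
def ZeroDimAt {α : Type*} [TopologicalSpace α] (Y : Set α) (y : α) : Prop :=
  ∀ V : Set α, IsOpen V → y ∈ V → ∃ C : Set α, RelClopen Y C ∧ y ∈ C ∧ C ⊆ V

/-!
The admissible open sets `U` (open, `y ∈ U`, `frontier U ∩ Y = ∅`) are closed under finite
intersections, so by compactness every open neighbourhood of `F(y)` contains the closure of an
admissible set. If `V₁ ∋ y` and `V₂` are disjoint open sets covering `closure U ∩ Y` for an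
admissible `U`, then `U ∩ V₁` is again admissible, hence `F(y) ⊆ closure V₁` misses `V₂`.
Applied to a separation of `F(y)` this gives connectedness; applied to a separation of `Y` by a
relatively clopen set (which has disjoint neighbourhoods, `X` being completely normal) it gives
`F(y) ∩ Y = {y}`. Finally, if `F(y) = {y}`, the traces `U ∩ Y` of admissible sets are
relatively clopen and shrink to `y`, so `Y` would be zero-dimensional at `y`.
-/

section

variable {X : Type*} [TopologicalSpace X] {Y : Set X} {y : X}

def admissibleSets (Y : Set X) (y : X) : Set (Set X) :=
  {U | IsOpen U ∧ y ∈ U ∧ frontier U ∩ Y = ∅}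

lemma univ_mem_admissibleSets : (univ : Set X) ∈ admissibleSets Y y :=
  ⟨isOpen_univ, mem_univ y, by simp⟩

lemma inter_mem_admissibleSets {U V : Set X} (hU : U ∈ admissibleSets Y y)
    (hV : V ∈ admissibleSets Y y) : U ∩ V ∈ admissibleSets Y y := by
  refine ⟨hU.1.inter hV.1, ⟨hU.2.1, hV.2.1⟩, subset_empty_iff.1 ?_⟩
  rintro x ⟨hx, hxY⟩
  rcases frontier_inter_subset U V hx with ⟨hxU, -⟩ | ⟨-, hxV⟩
  · exact hU.2.2.subset ⟨hxU, hxY⟩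
  · exact hV.2.2.subset ⟨hxV, hxY⟩

lemma Fset_eq_iInter : Fset Y y = ⋂ U : admissibleSets Y y, closure (U : Set X) := by
  ext x
  simp only [Fset, admissibleSets, mem_sInter, mem_iInter, Subtype.forall, mem_ofPred_eq]
  constructor
  · exact fun h U hU => h _ ⟨U, hU.1, hU.2.1, hU.2.2, rfl⟩
  · rintro h _ ⟨U, hUo, hyU, hUY, rfl⟩
    exact h U ⟨hUo, hyU, hUY⟩

lemma Fset_subset_closure {U : Set X} (hU : U ∈ admissibleSets Y y) : Fset Y y ⊆ closure U :=
  sInter_subset_of_mem ⟨U, hU.1, hU.2.1, hU.2.2, rfl⟩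

lemma mem_Fset_self : y ∈ Fset Y y :=
  mem_sInter.2 fun _ ⟨_, _, hyU, _, hT⟩ => hT ▸ subset_closure hyU

lemma isClosed_Fset : IsClosed (Fset Y y) :=
  isClosed_sInter fun _ ⟨_, _, _, _, hT⟩ => hT ▸ isClosed_closure

lemma exists_admissible_closure_subset [CompactSpace X] {O : Set X} (hO : IsOpen O)
    (hFO : Fset Y y ⊆ O) : ∃ U ∈ admissibleSets Y y, closure U ⊆ O := by
  have : Nonempty (admissibleSets Y y) := ⟨⟨univ, univ_mem_admissibleSets⟩⟩
  have hOF : Oᶜ ∩ ⋂ U : admissibleSets Y y, closure (U : Set X) = ∅ := by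
    rw [← Fset_eq_iInter, ← disjoint_iff_inter_eq_empty]
    exact disjoint_compl_left_iff_subset.2 hFO
  obtain ⟨⟨U, hU⟩, hUO⟩ := hO.isClosed_compl.isCompact.elim_directed_family_closed
    (fun U : admissibleSets Y y => closure (U : Set X)) (fun _ => isClosed_closure) hOF
    (fun U V => ⟨⟨_, inter_mem_admissibleSets U.2 V.2⟩,
      closure_mono inter_subset_left, closure_mono inter_subset_right⟩)
  exact ⟨U, hU, disjoint_compl_left_iff_subset.1 (disjoint_iff_inter_eq_empty.2 hUO)⟩

lemma inter_mem_admissibleSets_of_separation {U V₁ V₂ : Set X}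
    (hU : U ∈ admissibleSets Y y) (hV₁ : IsOpen V₁) (hV₂ : IsOpen V₂) (hV : Disjoint V₁ V₂)
    (hyV₁ : y ∈ V₁) (hUY : closure U ∩ Y ⊆ V₁ ∪ V₂) : U ∩ V₁ ∈ admissibleSets Y y := by
  have hfr : Disjoint (frontier V₁) (V₁ ∪ V₂) :=
    disjoint_union_right.2 ⟨disjoint_frontier_iff_isOpen.2 hV₁, hV.frontier_left hV₂⟩
  refine ⟨hU.1.inter hV₁, ⟨hU.2.1, hyV₁⟩, subset_empty_iff.1 ?_⟩
  rintro x ⟨hx, hxY⟩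
  rcases frontier_inter_subset U V₁ hx with ⟨hxU, -⟩ | ⟨hxU, hxV₁⟩
  · exact hU.2.2.subset ⟨hxU, hxY⟩
  · exact hfr.le_bot ⟨hxV₁, hUY ⟨hxU, hxY⟩⟩

lemma disjoint_Fset_of_separation {U V₁ V₂ : Set X} (hU : U ∈ admissibleSets Y y)
    (hV₁ : IsOpen V₁) (hV₂ : IsOpen V₂) (hV : Disjoint V₁ V₂) (hyV₁ : y ∈ V₁)
    (hUY : closure U ∩ Y ⊆ V₁ ∪ V₂) : Disjoint (Fset Y y) V₂ :=
  have hU₁ := inter_mem_admissibleSets_of_separation hU hV₁ hV₂ hV hyV₁ hUY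
  (hV.closure_left hV₂).mono_left <|
    (Fset_subset_closure hU₁).trans (closure_mono inter_subset_right)

lemma Fset_subset_of_separation [CompactSpace X] {V₁ V₂ : Set X} (hV₁ : IsOpen V₁)
    (hV₂ : IsOpen V₂) (hV : Disjoint V₁ V₂) (hyV₁ : y ∈ V₁) (hF : Fset Y y ⊆ V₁ ∪ V₂) :
    Fset Y y ⊆ V₁ := by
  obtain ⟨U, hU, hUV⟩ := exists_admissible_closure_subset (hV₁.union hV₂) hF
  have := disjoint_Fset_of_separation hU hV₁ hV₂ hV hyV₁ (inter_subset_left.trans hUV)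
  exact fun x hx => (hF hx).resolve_right (disjoint_left.1 this hx)

lemma isPreconnected_Fset [CompactSpace X] [NormalSpace X] : IsPreconnected (Fset Y y) := by
  refine (isPreconnected_iff_subset_of_fully_disjoint_closed isClosed_Fset).2 ?_
  intro u v hu hv huv hd
  obtain ⟨V₁, V₂, hV₁, hV₂, huV₁, hvV₂, hV⟩ := normal_separation hu hv hd
  have hF : Fset Y y ⊆ V₁ ∪ V₂ := huv.trans (union_subset_union huV₁ hvV₂)
  rcases huv mem_Fset_self with hyu | hyv
  · have := Fset_subset_of_separation hV₁ hV₂ hV (huV₁ hyu) hF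
    exact Or.inl fun x hx => (huv hx).resolve_right fun hxv => hV.le_bot ⟨this hx, hvV₂ hxv⟩
  · have := Fset_subset_of_separation hV₂ hV₁ hV.symm (hvV₂ hyv) (union_comm V₁ V₂ ▸ hF)
    exact Or.inr fun x hx => (huv hx).resolve_left fun hxu => hV.le_bot ⟨huV₁ hxu, this hx⟩

lemma RelClopen.separatedNhds_diff [CompletelyNormalSpace X] {C : Set X}
    (hC : RelClopen Y C) : SeparatedNhds C (Y \ C) := by
  obtain ⟨⟨U, hU, hCU⟩, ⟨F, hF, hCF⟩⟩ := hC
  refine separatedNhds_iff_disjoint.2 (completely_normal ?_ ?_)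
  · have hCF' : closure C ⊆ F := closure_minimal (hCF ▸ inter_subset_left) hF
    exact disjoint_left.2 fun x hx ⟨hxY, hxC⟩ => hxC (hCF ▸ ⟨hCF' hx, hxY⟩)
  · refine Disjoint.closure_right ?_ hU |>.mono_left (hCU ▸ inter_subset_left)
    exact disjoint_left.2 fun x hxU ⟨hxY, hxC⟩ => hxC (hCU ▸ ⟨hxU, hxY⟩)

lemma Fset_inter_eq_singleton [CompletelyNormalSpace X] (hTD : TotDisconnIn Y) (hy : y ∈ Y) :
    Fset Y y ∩ Y = {y} := by
  refine Subset.antisymm ?_ (singleton_subset_iff.2 ⟨mem_Fset_self, hy⟩)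
  rintro z ⟨hzF, hzY⟩
  by_contra hzy
  obtain ⟨C, hC, hyC, hzC⟩ := hTD y hy z hzY (Ne.symm hzy)
  obtain ⟨V₁, V₂, hV₁, hV₂, hCV₁, hV₂C, hV⟩ := hC.separatedNhds_diff
  have hY : closure univ ∩ Y ⊆ V₁ ∪ V₂ := by
    rintro x ⟨-, hxY⟩
    by_cases hxC : x ∈ C
    · exact Or.inl (hCV₁ hxC)
    · exact Or.inr (hV₂C ⟨hxY, hxC⟩)
  exact disjoint_left.1
    (disjoint_Fset_of_separation univ_mem_admissibleSets hV₁ hV₂ hV (hCV₁ hyC) hY)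
    hzF (hV₂C ⟨hzY, hzC⟩)

lemma relClopen_inter_of_frontier_inter_eq_empty {U : Set X} (hU : IsOpen U)
    (hUY : frontier U ∩ Y = ∅) : RelClopen Y (U ∩ Y) := by
  refine ⟨⟨U, hU, rfl⟩, ⟨closure U, isClosed_closure, ?_⟩⟩
  refine Subset.antisymm (inter_subset_inter_left Y subset_closure) ?_
  rintro x ⟨hxU, hxY⟩
  refine ⟨?_, hxY⟩
  by_contra hx
  exact hUY.subset ⟨⟨hxU, by rwa [hU.interior_eq]⟩, hxY⟩

lemma Fset_nontrivial [CompactSpace X] (hy : y ∈ Y) (hnz : ¬ ZeroDimAt Y y) :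
    (Fset Y y).Nontrivial := by
  by_contra hF
  refine hnz fun V hV hyV => ?_
  have hFV : Fset Y y ⊆ V := fun x hx => (not_nontrivial_iff.1 hF hx mem_Fset_self) ▸ hyV
  obtain ⟨U, hU, hUV⟩ := exists_admissible_closure_subset hV hFV
  exact ⟨U ∩ Y, relClopen_inter_of_frontier_inter_eq_empty hU.1 hU.2.2, ⟨hU.2.1, hy⟩,
    inter_subset_left.trans (subset_closure.trans hUV)⟩

end

theorem stmt3 {X : Type*} [MetricSpace X] [CompactSpace X] (Y : Set X)
    (hTD : TotDisconnIn Y) (y : X) (hy : y ∈ Y)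
    (hnz : ¬ ZeroDimAt Y y) :
    IsCompact (Fset Y y) ∧ IsConnected (Fset Y y) ∧ (Fset Y y).Nontrivial ∧
      Fset Y y ∩ Y = {y} :=
  ⟨isClosed_Fset.isCompact, ⟨⟨y, mem_Fset_self⟩, isPreconnected_Fset⟩,
    Fset_nontrivial hy hnz, Fset_inter_eq_singleton hTD hy⟩
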